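/- Let M ∈ ℝ^{n×m} with SVD partitioned as M = U₁Σ₁V₁ᵀ + U₂Σ₂V₂ᵀ where Σ₁ contains the top r singular values. Let Ψ ∈ ℝ^{m×d} and set Ψ₁ = V₁ᵀΨ, Ψ₂ = V₂ᵀΨ, Y = MΨ. If Ψ₁ has full row rank r, then ‖M − P_Y M‖₂² ≤ ‖Σ₂‖₂² + ‖Σ₂Ψ₂Ψ₁†‖₂², where P_Y is the orthogonal projection onto the column space of Y and Ψ₁† is the Moore–Penrose pseudoinverse. -/

import Mathlib

/-! With `X = Ψ₁†` a right inverse of `Ψ₁ = V₁ᵀΨ`, the matrix `MΨXV₁ᵀ` lies in the range of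
`Y = MΨ` and reproduces the top singular part of `M`, so `M − MΨXV₁ᵀ = U₂G` with
`G = Σ₂V₂ᵀ − FV₁ᵀ`, `F = Σ₂Ψ₂X`. As `P` fixes the range of `Y`, `M − PM = (1 − P)U₂G`.
The projection `1 − P` and the isometry `U₂` do not increase the spectral norm, and
orthonormality of `[V₁ V₂]` gives `GGᵀ = Σ₂Σ₂ᵀ + FFᵀ`, whence
`‖G‖² = ‖GGᵀ‖ ≤ ‖Σ₂‖² + ‖F‖²`. -/

open Matrix

/-- Spectral norm of a real matrix. -/
noncomputable def spec {n m : ℕ} (A : Matrix (Fin n) (Fin m) ℝ) : ℝ :=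
  ‖LinearMap.toContinuousLinearMap (Matrix.toEuclideanLin A)‖

section Algebra

variable {R : Type*} [Ring R] {l m n p q : Type*}

lemma sub_mul_eq_one_sub_mul_sub_of_mul_eq [Fintype m] [DecidableEq m] [Fintype n]
    {P : Matrix m m R} {Y : Matrix m n R} (hPY : P * Y = Y) (M : Matrix m l R)
    (C : Matrix n l R) :
    M - P * M = (1 - P) * (M - Y * C) := by
  rw [Matrix.sub_mul, Matrix.one_mul, Matrix.mul_sub, ← Matrix.mul_assoc, hPY]
  abel

lemma sub_mul_rightInverse_mul_eq [Fintype l] [Fintype n] [Fintype p] [DecidableEq p]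
    [Fintype q] {M : Matrix m n R} {U₁ : Matrix m p R} {U₂ : Matrix m q R}
    {S₁ : Matrix p p R} {S₂ : Matrix q q R} {W₁ : Matrix p n R} {W₂ : Matrix q n R}
    (hM : M = U₁ * S₁ * W₁ + U₂ * S₂ * W₂) {Ψ : Matrix n l R} {X : Matrix l p R}
    (hX : W₁ * Ψ * X = 1) :
    M - M * Ψ * (X * W₁) = U₂ * (S₂ * W₂ - S₂ * (W₂ * Ψ) * X * W₁) := by
  have hW₁ : W₁ * (Ψ * (X * W₁)) = W₁ := by
    rw [← Matrix.mul_assoc, ← Matrix.mul_assoc, hX, Matrix.one_mul]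
  subst hM
  simp only [Matrix.add_mul, Matrix.mul_sub, Matrix.mul_assoc, hW₁]
  abel

variable [StarRing R]

lemma sub_mul_conjTranspose_sub_eq_add [Fintype n] [Fintype p] [DecidableEq p]
    [Fintype q] [DecidableEq q] {V₁ : Matrix n p R} {V₂ : Matrix n q R}
    (hV₁ : V₁ᴴ * V₁ = 1) (hV₂ : V₂ᴴ * V₂ = 1) (hV₁₂ : V₁ᴴ * V₂ = 0)
    (A : Matrix m q R) (B : Matrix m p R) :
    (A * V₂ᴴ - B * V₁ᴴ) * (A * V₂ᴴ - B * V₁ᴴ)ᴴ = A * Aᴴ + B * Bᴴ := by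
  have hV₂₁ : V₂ᴴ * V₁ = 0 := by
    simpa only [conjTranspose_mul, conjTranspose_conjTranspose, conjTranspose_zero]
      using congrArg conjTranspose hV₁₂
  simp only [conjTranspose_sub, conjTranspose_mul, conjTranspose_conjTranspose, Matrix.sub_mul,
    Matrix.mul_sub, Matrix.mul_assoc, ← Matrix.mul_assoc V₁ᴴ, ← Matrix.mul_assoc V₂ᴴ, hV₁, hV₂,
    hV₁₂, hV₂₁, Matrix.one_mul, Matrix.zero_mul, Matrix.mul_zero, sub_zero]
  abel

end Algebra

open scoped Matrix.Norms.L2Operator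

section L2OpNorm

variable {𝕜 : Type*} [RCLike 𝕜] {l m n : Type*} [Fintype l] [Fintype m] [DecidableEq m]
  [Fintype n] [DecidableEq n]

lemma l2_opNorm_mul_conjTranspose_self (A : Matrix m n 𝕜) : ‖A * Aᴴ‖ = ‖A‖ * ‖A‖ := by
  simpa only [conjTranspose_conjTranspose, l2_opNorm_conjTranspose]
    using l2_opNorm_conjTranspose_mul_self Aᴴ

lemma l2_opNorm_sq_le_of_mul_conjTranspose_eq_add [DecidableEq l] {p : Type*} [Fintype p]
    [DecidableEq p] {G : Matrix m n 𝕜} {A : Matrix m l 𝕜} {B : Matrix m p 𝕜}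
    (h : G * Gᴴ = A * Aᴴ + B * Bᴴ) :
    ‖G‖ ^ 2 ≤ ‖A‖ ^ 2 + ‖B‖ ^ 2 := by
  simp only [sq, ← l2_opNorm_mul_conjTranspose_self, h]
  exact norm_add_le _ _

lemma l2_opNorm_mul_of_conjTranspose_mul_self_eq_one {U : Matrix l m 𝕜}
    (hU : Uᴴ * U = 1) (A : Matrix m n 𝕜) : ‖U * A‖ = ‖A‖ := by
  refine (mul_self_inj (norm_nonneg _) (norm_nonneg _)).mp ?_
  rw [← l2_opNorm_conjTranspose_mul_self, ← l2_opNorm_conjTranspose_mul_self, conjTranspose_mul,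
    Matrix.mul_assoc, ← Matrix.mul_assoc Uᴴ, hU, Matrix.one_mul]

lemma l2_opNorm_mul_le_of_isStarProjection {P : Matrix m m 𝕜}
    (hP : IsStarProjection P) (A : Matrix m n 𝕜) : ‖P * A‖ ≤ ‖A‖ :=
  (l2_opNorm_mul P A).trans (mul_le_of_le_one_left (norm_nonneg A) hP.norm_le)

end L2OpNorm

theorem stmt_7_general (n m r k d : ℕ)
    (U₁ : Matrix (Fin n) (Fin r) ℝ) (U₂ : Matrix (Fin n) (Fin k) ℝ)
    (V₁ : Matrix (Fin m) (Fin r) ℝ) (V₂ : Matrix (Fin m) (Fin k) ℝ)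
    (σ₁ : Fin r → ℝ) (σ₂ : Fin k → ℝ)
    (hU2 : U₂ᵀ * U₂ = 1)
    (hV1 : V₁ᵀ * V₁ = 1) (hV2 : V₂ᵀ * V₂ = 1) (hV12 : V₁ᵀ * V₂ = 0)
    (M : Matrix (Fin n) (Fin m) ℝ)
    (hM : M = U₁ * Matrix.diagonal σ₁ * V₁ᵀ + U₂ * Matrix.diagonal σ₂ * V₂ᵀ)
    (Ψ : Matrix (Fin m) (Fin d) ℝ)
    (Ψ₁ : Matrix (Fin r) (Fin d) ℝ) (hΨ₁ : Ψ₁ = V₁ᵀ * Ψ)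
    (Ψ₂ : Matrix (Fin k) (Fin d) ℝ) (hΨ₂ : Ψ₂ = V₂ᵀ * Ψ)
    (Ψ₁dag : Matrix (Fin d) (Fin r) ℝ)
    (hfullrank : Ψ₁ * Ψ₁dag = 1)
    (P : Matrix (Fin n) (Fin n) ℝ)
    (hPsymm : Pᵀ = P) (hPidem : P * P = P)
    (hPfix : P * (M * Ψ) = M * Ψ) :
    spec (M - P * M) ^ 2 ≤
      spec (Matrix.diagonal σ₂) ^ 2 + spec (Matrix.diagonal σ₂ * Ψ₂ * Ψ₁dag) ^ 2 := by
  simp only [← conjTranspose_eq_transpose_of_trivial] at hU2 hV1 hV2 hV12 hM hΨ₁ hΨ₂ hPsymm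
  subst hΨ₁ hΨ₂
  set G := diagonal σ₂ * V₂ᴴ - diagonal σ₂ * (V₂ᴴ * Ψ) * Ψ₁dag * V₁ᴴ
  have hQ : IsStarProjection (1 - P) := IsStarProjection.one_sub ⟨hPidem, hPsymm⟩
  have hresidual : M - P * M = (1 - P) * (U₂ * G) := by
    rw [sub_mul_eq_one_sub_mul_sub_of_mul_eq hPfix M (Ψ₁dag * V₁ᴴ),
      sub_mul_rightInverse_mul_eq hM hfullrank]
  have hG : G * Gᴴ = diagonal σ₂ * (diagonal σ₂)ᴴ
      + diagonal σ₂ * (V₂ᴴ * Ψ) * Ψ₁dag * (diagonal σ₂ * (V₂ᴴ * Ψ) * Ψ₁dag)ᴴ :=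
    sub_mul_conjTranspose_sub_eq_add hV1 hV2 hV12 _ _
  calc spec (M - P * M) ^ 2 = ‖(1 - P) * (U₂ * G)‖ ^ 2 := by rw [hresidual]; rfl
    _ ≤ ‖U₂ * G‖ ^ 2 := by gcongr; exact l2_opNorm_mul_le_of_isStarProjection hQ _
    _ = ‖G‖ ^ 2 := by rw [l2_opNorm_mul_of_conjTranspose_mul_self_eq_one hU2]
    _ ≤ _ := l2_opNorm_sq_le_of_mul_conjTranspose_eq_add hG

/-- Halko–Martinsson–Tropp, Thm 9.1: deterministic bound for randomized
range finding. `k` plays the role of `m − r`; `P` is the orthogonal projection onto the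
column space of `Y = MΨ`; `Ψ₁dag` is the Moore–Penrose pseudoinverse of `Ψ₁ = V₁ᵀΨ`,
characterized by the four Penrose equations; full row rank of `Ψ₁` is `Ψ₁ Ψ₁† = I`. -/
theorem stmt_7 (n m r k d : ℕ)
    (U₁ : Matrix (Fin n) (Fin r) ℝ) (U₂ : Matrix (Fin n) (Fin k) ℝ)
    (V₁ : Matrix (Fin m) (Fin r) ℝ) (V₂ : Matrix (Fin m) (Fin k) ℝ)
    (σ₁ : Fin r → ℝ) (σ₂ : Fin k → ℝ)
    (hU1 : U₁ᵀ * U₁ = 1) (hU2 : U₂ᵀ * U₂ = 1) (hU12 : U₁ᵀ * U₂ = 0)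
    (hV1 : V₁ᵀ * V₁ = 1) (hV2 : V₂ᵀ * V₂ = 1) (hV12 : V₁ᵀ * V₂ = 0)
    (M : Matrix (Fin n) (Fin m) ℝ)
    (hM : M = U₁ * Matrix.diagonal σ₁ * V₁ᵀ + U₂ * Matrix.diagonal σ₂ * V₂ᵀ)
    (Ψ : Matrix (Fin m) (Fin d) ℝ)
    (Ψ₁ : Matrix (Fin r) (Fin d) ℝ) (hΨ₁ : Ψ₁ = V₁ᵀ * Ψ)
    (Ψ₂ : Matrix (Fin k) (Fin d) ℝ) (hΨ₂ : Ψ₂ = V₂ᵀ * Ψ)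
    (Ψ₁dag : Matrix (Fin d) (Fin r) ℝ)
    (hp1 : Ψ₁ * Ψ₁dag * Ψ₁ = Ψ₁) (hp2 : Ψ₁dag * Ψ₁ * Ψ₁dag = Ψ₁dag)
    (hp3 : (Ψ₁ * Ψ₁dag)ᵀ = Ψ₁ * Ψ₁dag) (hp4 : (Ψ₁dag * Ψ₁)ᵀ = Ψ₁dag * Ψ₁)
    (hfullrank : Ψ₁ * Ψ₁dag = 1)
    (P : Matrix (Fin n) (Fin n) ℝ)
    (hPsymm : Pᵀ = P) (hPidem : P * P = P)
    (hPfix : P * (M * Ψ) = M * Ψ)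
    (hPrange : ∃ W : Matrix (Fin d) (Fin n) ℝ, P = M * Ψ * W) :
    spec (M - P * M) ^ 2 ≤
      spec (Matrix.diagonal σ₂) ^ 2 + spec (Matrix.diagonal σ₂ * Ψ₂ * Ψ₁dag) ^ 2 :=
  stmt_7_general n m r k d U₁ U₂ V₁ V₂ σ₁ σ₂ hU2 hV1 hV2 hV12 M hM Ψ Ψ₁ hΨ₁ Ψ₂ hΨ₂ Ψ₁dag hfullrank P
    hPsymm hPidem hPfix
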